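/- arXiv:math/0504485 — 3 statements merged into one kernel-verified Lean document; each statement's English description precedes it below -/
import Mathlib

section
/- Let z, s, v be real with 0 < z < 1, let a ≤ b be natural numbers with v + a > 0, let C = z^a Φ(z,s,v+a) − z^{b+1} Φ(z,s,v+b+1), and let y be a real number with 0 < y and y·z < 1. Then the probability generating function of the doubly truncated Lerch distribution satisfies Σ_{x=a}^{b} y^x · (1/C) · z^x/(v+x)^s = ((yz)^a Φ(yz,s,v+a) − (yz)^{b+1} Φ(yz,s,v+b+1)) / (z^a Φ(z,s,v+a) − z^{b+1} Φ(z,s,v+b+1)). -/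
/-- Lerch's transcendent Φ(z,s,v) = Σ_{n=0}^∞ z^n / (n+v)^s, with real powers. -/
noncomputable def lerchPhi (z s v : ℝ) : ℝ := ∑' n : ℕ, z ^ n / ((n : ℝ) + v) ^ s

open Filter Topology

lemma lerch_summable (w s c : ℝ) (hw0 : 0 < w) (hw1 : w < 1) (hc : 0 < c) :
    Summable (fun n : ℕ => w ^ n / ((n : ℝ) + c) ^ s) := by
  set g : ℕ → ℝ := fun n => w ^ n / ((n : ℝ) + c) ^ s with hg
  have hpos : ∀ n : ℕ, 0 < g n := fun n =>
    div_pos (pow_pos hw0 n) (Real.rpow_pos_of_pos (by positivity) s)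
  have hne : ∀ᶠ n in atTop, g n ≠ 0 := Eventually.of_forall fun n => (hpos n).ne'
  apply summable_of_ratio_test_tendsto_lt_one hw1 hne
  have h1 : Tendsto (fun n : ℕ => (n : ℝ) + 1 + c) atTop atTop := by
    apply tendsto_atTop_add_const_right
    exact tendsto_atTop_add_const_right _ _ tendsto_natCast_atTop_atTop
  have h2 : Tendsto (fun n : ℕ => ((n : ℝ) + c) / ((n : ℝ) + 1 + c)) atTop (𝓝 1) := by
    have h3 : Tendsto (fun n : ℕ => 1 - ((n : ℝ) + 1 + c)⁻¹) atTop (𝓝 (1 - 0)) :=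
      tendsto_const_nhds.sub (tendsto_inv_atTop_zero.comp h1)
    rw [sub_zero] at h3
    refine h3.congr fun n => ?_
    have hne : ((n : ℝ) + 1 + c) ≠ 0 := by positivity
    field_simp
    ring
  have h4 : Tendsto (fun n : ℕ => w * (((n : ℝ) + c) / ((n : ℝ) + 1 + c)) ^ s) atTop
      (𝓝 (w * (1 : ℝ) ^ s)) :=
    tendsto_const_nhds.mul (h2.rpow_const (Or.inl one_ne_zero))
  rw [Real.one_rpow, mul_one] at h4
  refine h4.congr fun n => ?_
  have hn1 : (0 : ℝ) < (n : ℝ) + c := by positivity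
  have hn2 : (0 : ℝ) < (n : ℝ) + 1 + c := by positivity
  have : ‖g (n + 1)‖ = g (n + 1) := abs_of_pos (hpos _)
  rw [Real.norm_eq_abs, Real.norm_eq_abs, abs_of_pos (hpos _), abs_of_pos (hpos _)]
  simp only [hg]
  rw [Real.div_rpow hn1.le hn2.le]
  have hcast : ((n + 1 : ℕ) : ℝ) + c = (n : ℝ) + 1 + c := by push_cast; ring
  rw [hcast, pow_succ]
  have e1 : ((n : ℝ) + c) ^ s ≠ 0 := (Real.rpow_pos_of_pos hn1 s).ne'
  have e2 : ((n : ℝ) + 1 + c) ^ s ≠ 0 := (Real.rpow_pos_of_pos hn2 s).ne'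
  have e3 : w ^ n ≠ 0 := (pow_pos hw0 n).ne'
  field_simp

lemma lerch_key (w s v : ℝ) (hw0 : 0 < w) (hw1 : w < 1) (a b : ℕ) (hab : a ≤ b)
    (hva : v + a > 0) :
    w ^ a * lerchPhi w s (v + a) - w ^ (b + 1) * lerchPhi w s (v + b + 1) =
      ∑ x ∈ Finset.Icc a b, w ^ x / (v + (x : ℝ)) ^ s := by
  set f : ℕ → ℝ := fun x => w ^ x / (v + (x : ℝ)) ^ s with hf
  have hsg : Summable (fun n : ℕ => w ^ n / ((n : ℝ) + (v + a)) ^ s) :=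
    lerch_summable w s (v + a) hw0 hw1 hva
  have hfa : ∀ n : ℕ, f (n + a) = w ^ a * (w ^ n / ((n : ℝ) + (v + a)) ^ s) := by
    intro n
    simp only [hf]
    rw [pow_add]
    have : v + ((n + a : ℕ) : ℝ) = (n : ℝ) + (v + a) := by push_cast; ring
    rw [this]
    ring
  have hsf : Summable f := by
    rw [← summable_nat_add_iff a]
    exact (hsg.mul_left (w ^ a)).congr fun n => (hfa n).symm
  -- express the two tail sums
  have ht : ∀ k : ℕ, v + (k : ℝ) > 0 → w ^ k * lerchPhi w s (v + k) = ∑' n, f (n + k) := by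
    intro k hk
    rw [lerchPhi, ← tsum_mul_left]
    congr 1
    funext n
    simp only [hf]
    rw [pow_add]
    have : v + ((n + k : ℕ) : ℝ) = (n : ℝ) + (v + k) := by push_cast; ring
    rw [this]
    ring
  have hta : w ^ a * lerchPhi w s (v + a) = ∑' n, f (n + a) := ht a hva
  have htb : w ^ (b + 1) * lerchPhi w s (v + b + 1) = ∑' n, f (n + (b + 1)) := by
    have hk : v + ((b + 1 : ℕ) : ℝ) > 0 := by
      have hcast : (a : ℝ) ≤ ((b + 1 : ℕ) : ℝ) := by exact_mod_cast (by omega : a ≤ b + 1)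
      linarith
    have := ht (b + 1) hk
    rw [← this]
    congr 2
    push_cast
    ring
  rw [hta, htb]
  have ea := Summable.sum_add_tsum_nat_add a hsf
  have eb := Summable.sum_add_tsum_nat_add (b + 1) hsf
  have : (∑' n, f (n + a)) - (∑' n, f (n + (b + 1))) =
      (∑ i ∈ Finset.range (b + 1), f i) - ∑ i ∈ Finset.range a, f i := by
    linarith
  rw [this, ← Finset.sum_Ico_eq_sub _ (by omega), Finset.Ico_add_one_right_eq_Icc]

/-- Probability generating function of the doubly truncated Lerch distribution. -/
theorem doublyTruncated_pgf (z s v : ℝ) (hz0 : 0 < z) (hz1 : z < 1)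
    (a b : ℕ) (hab : a ≤ b) (hva : v + a > 0) (C : ℝ)
    (hC : C = z ^ a * lerchPhi z s (v + a) - z ^ (b + 1) * lerchPhi z s (v + b + 1))
    (y : ℝ) (hy : 0 < y) (hyz : y * z < 1) :
    ∑ x ∈ Finset.Icc a b, y ^ x * ((1 / C) * (z ^ x / (v + (x : ℝ)) ^ s)) =
      ((y * z) ^ a * lerchPhi (y * z) s (v + a) -
          (y * z) ^ (b + 1) * lerchPhi (y * z) s (v + b + 1)) /
        (z ^ a * lerchPhi z s (v + a) - z ^ (b + 1) * lerchPhi z s (v + b + 1)) := by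
  have hyz0 : 0 < y * z := mul_pos hy hz0
  rw [lerch_key (y * z) s v hyz0 hyz a b hab hva, ← hC]
  rw [Finset.sum_div]
  apply Finset.sum_congr rfl
  intro x _
  rw [mul_pow]
  field_simp
end

section
/- Let z, s, v be real with 0 < z < 1 and v > 0, and let r be a natural number. Then the rth uncorrected moment of the zero-truncated Lerch distribution satisfies Σ_{x=1}^{∞} x^r · z^x/((v+x)^s · z Φ(z,s,v+1)) = (1/Φ(z,s,v+1)) · Σ_{j=0}^{r} C(r,j) · (−v)^{r−j} · Φ(z,s−j,v+1), where C(r,j) is the binomial coefficient. -/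
lemma lerch_summable_s11 {z : ℝ} (hz0 : 0 < z) (hz1 : z < 1) (t w : ℝ) (hw : 1 ≤ w) :
    Summable (fun n : ℕ => z ^ n / ((n : ℝ) + w) ^ t) := by
  obtain ⟨k, hk⟩ := exists_nat_ge (-t)
  have hz : ‖z‖ < 1 := by rw [Real.norm_eq_abs, abs_of_pos hz0]; exact hz1
  have h0 : Summable (fun n : ℕ => (n : ℝ) ^ k * z ^ n) :=
    summable_pow_mul_geometric_of_norm_lt_one k hz
  have h1 : Summable (fun n : ℕ => ((n : ℝ) + 1) ^ k * z ^ n) := by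
    have h2 := ((summable_nat_add_iff 1).2 h0).mul_right z⁻¹
    refine h2.congr fun n => ?_
    push_cast
    field_simp
    ring
  apply Summable.of_nonneg_of_le (fun n => by positivity)
    (fun n => ?_) (h1.mul_left ((w+1)^k))
  have hn0 : (0:ℝ) ≤ (n:ℝ) := n.cast_nonneg
  have hnw : (1:ℝ) ≤ (n:ℝ) + w := by linarith
  have hb : ((n:ℝ) + w) ^ (-t) ≤ ((n:ℝ)+w) ^ (k:ℝ) :=
    Real.rpow_le_rpow_of_exponent_le hnw hk
  calc z^n / ((n:ℝ)+w)^t = z^n * ((n:ℝ)+w)^(-t) := by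
        rw [Real.rpow_neg (by linarith), div_eq_mul_inv]
      _ ≤ z^n * ((n:ℝ)+w)^(k:ℝ) :=
        mul_le_mul_of_nonneg_left hb (by positivity)
      _ = z^n * ((n:ℝ)+w)^k := by rw [Real.rpow_natCast]
      _ ≤ z^n * (((n:ℝ)+1)*(w+1))^k := by
        apply mul_le_mul_of_nonneg_left _ (by positivity)
        exact pow_le_pow_left₀ (by linarith) (by nlinarith) k
      _ = (w+1)^k * (((n:ℝ)+1)^k * z^n) := by rw [mul_pow]; ring

/-- rth uncorrected moment of the zero-truncated Lerch distribution. -/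
theorem zeroTruncated_uncorrected_moment (z s v : ℝ) (hz0 : 0 < z) (hz1 : z < 1)
    (hv : 0 < v) (r : ℕ) :
    ∑' x : ℕ, ((x : ℝ) + 1) ^ r *
        (z ^ (x + 1) / ((v + ((x : ℝ) + 1)) ^ s * (z * lerchPhi z s (v + 1)))) =
      (1 / lerchPhi z s (v + 1)) *
        ∑ j ∈ Finset.range (r + 1), (r.choose j : ℝ) * (-v) ^ (r - j) *
          lerchPhi z (s - j) (v + 1) := by
  have hw : (1:ℝ) ≤ v + 1 := by linarith
  have hΦs : Summable (fun n : ℕ => z ^ n / ((n : ℝ) + (v + 1)) ^ s) :=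
    lerch_summable_s11 hz0 hz1 s (v+1) hw
  have hΦ : 0 < lerchPhi z s (v + 1) := by
    refine Summable.tsum_pos hΦs (fun n => by positivity) 0 ?_
    simp only [pow_zero, Nat.cast_zero, zero_add]
    positivity
  set Φ := lerchPhi z s (v + 1) with hΦdef
  -- step 1: pull out 1/Φ and simplify terms
  have step1 : ∀ x : ℕ, ((x : ℝ) + 1) ^ r *
      (z ^ (x + 1) / ((v + ((x : ℝ) + 1)) ^ s * (z * Φ))) =
      Φ⁻¹ * (∑ j ∈ Finset.range (r + 1), ((r.choose j : ℝ) * (-v) ^ (r - j)) *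
        (z ^ x / ((x : ℝ) + (v + 1)) ^ (s - (j : ℕ)))) := by
    intro x
    have hA : (0:ℝ) < ((x:ℝ) + (v+1)) ^ s := by positivity
    have key : ((x : ℝ) + 1) ^ r * (z ^ x / ((x : ℝ) + (v + 1)) ^ s) =
        ∑ j ∈ Finset.range (r + 1), ((r.choose j : ℝ) * (-v) ^ (r - j)) *
          (z ^ x / ((x : ℝ) + (v + 1)) ^ (s - (j : ℕ))) := by
      have hxp : ((x : ℝ) + 1) ^ r = ∑ j ∈ Finset.range (r + 1),
          ((x:ℝ) + (v+1)) ^ j * (-v) ^ (r - j) * (r.choose j : ℝ) := by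
        have := add_pow (((x:ℝ) + (v+1))) (-v) r
        have heq : ((x:ℝ) + (v+1)) + (-v) = (x:ℝ) + 1 := by ring
        rw [heq] at this
        exact this
      rw [hxp, Finset.sum_mul]
      refine Finset.sum_congr rfl fun j hj => ?_
      have hrs : ((x:ℝ) + (v+1)) ^ (s - (j:ℕ)) =
          ((x:ℝ) + (v+1)) ^ s / ((x:ℝ) + (v+1)) ^ (j:ℕ) := by
        rw [Real.rpow_sub (by positivity), Real.rpow_natCast]
      rw [hrs]
      have hb : (0:ℝ) < ((x:ℝ) + (v+1)) ^ (j:ℕ) := by positivity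
      field_simp
    rw [← key, pow_succ]
    have hvx : v + ((x:ℝ) + 1) = (x:ℝ) + (v + 1) := by ring
    rw [hvx]
    field_simp
  rw [tsum_congr step1, tsum_mul_left]
  rw [one_div]
  congr 1
  have hsum : ∀ j ∈ Finset.range (r + 1),
      Summable (fun x : ℕ => ((r.choose j : ℝ) * (-v) ^ (r - j)) *
        (z ^ x / ((x : ℝ) + (v + 1)) ^ (s - (j : ℕ)))) := fun j _ =>
    (lerch_summable_s11 hz0 hz1 (s - (j:ℕ)) (v+1) hw).mul_left _
  rw [Summable.tsum_finsetSum hsum]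
  refine Finset.sum_congr rfl fun j hj => ?_
  rw [tsum_mul_left]
  rfl
end

section
/- Let z, s, v be real with 0 < z < 1 and v > 0, and let r be a natural number. Then the rth uncorrected moment of the Lerch distribution satisfies Σ_{x=0}^{∞} x^r · z^x/((v+x)^s · Φ(z,s,v)) = (1/Φ(z,s,v)) · Σ_{j=0}^{r} C(r,j) · (−v)^{r−j} · Φ(z,s−j,v), where C(r,j) is the binomial coefficient. -/
open Real Finset

lemma summable_geom_rpow (z v t : ℝ) (hz0 : 0 < z) (hz1 : z < 1) (hv : 0 < v) :
    Summable (fun x : ℕ => z ^ x * ((x : ℝ) + v) ^ t) := by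
  rcases le_or_gt t 0 with ht | ht
  · refine Summable.of_nonneg_of_le (fun x => by positivity) (fun x => ?_)
      ((summable_geometric_of_lt_one hz0.le hz1).mul_right (v ^ t))
    have h1 : ((x : ℝ) + v) ^ t ≤ v ^ t :=
      Real.rpow_le_rpow_of_nonpos hv (by linarith [Nat.cast_nonneg (α := ℝ) x]) ht
    have : (0:ℝ) ≤ z ^ x := by positivity
    nlinarith [Real.rpow_pos_of_pos (show (0:ℝ) < (x:ℝ) + v by positivity) t]
  · set M : ℝ := max v 1 with hM
    have hM1 : (1:ℝ) ≤ M := le_max_right _ _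
    have hMv : v ≤ M := le_max_left _ _
    set m : ℕ := ⌈t⌉₊ with hm
    have hbase : Summable (fun x : ℕ => ((x : ℝ) + 1) ^ m * z ^ x) := by
      have h := (summable_pow_mul_geometric_of_norm_lt_one m
        (r := z) (by rwa [Real.norm_eq_abs, abs_of_pos hz0])).comp_injective Nat.succ_injective
      have h2 := h.mul_right z⁻¹
      refine h2.congr fun x => ?_
      have hzne : z ≠ 0 := ne_of_gt hz0
      simp only [Function.comp, Nat.succ_eq_add_one, pow_succ]
      push_cast
      field_simp
    refine Summable.of_nonneg_of_le (fun x => by positivity) (fun x => ?_)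
      ((hbase.mul_left (M ^ t)).congr fun x => rfl)
    have hxv : (0:ℝ) < (x : ℝ) + v := by positivity
    have step1 : ((x : ℝ) + v) ^ t ≤ (((x : ℝ) + 1) * M) ^ t := by
      apply Real.rpow_le_rpow hxv.le _ ht.le
      nlinarith [Nat.cast_nonneg (α := ℝ) x]
    have step2 : (((x : ℝ) + 1) * M) ^ t = ((x : ℝ) + 1) ^ t * M ^ t :=
      Real.mul_rpow (by positivity) (by positivity)
    have step3 : ((x : ℝ) + 1) ^ t ≤ ((x : ℝ) + 1) ^ (m : ℝ) :=
      Real.rpow_le_rpow_of_exponent_le (by linarith [Nat.cast_nonneg (α := ℝ) x])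
        (Nat.le_ceil t)
    have step4 : ((x : ℝ) + 1) ^ (m : ℝ) = ((x : ℝ) + 1) ^ m := Real.rpow_natCast _ _
    have hz' : (0:ℝ) ≤ z ^ x := by positivity
    have hMt : (0:ℝ) ≤ M ^ t := by positivity
    calc z ^ x * ((x:ℝ) + v) ^ t ≤ z ^ x * (((x:ℝ)+1) * M) ^ t :=
          mul_le_mul_of_nonneg_left step1 hz'
      _ = z ^ x * (((x:ℝ)+1) ^ t * M ^ t) := by rw [step2]
      _ ≤ z ^ x * (((x:ℝ)+1) ^ (m:ℝ) * M ^ t) :=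
          mul_le_mul_of_nonneg_left (mul_le_mul_of_nonneg_right step3 hMt) hz'
      _ = M ^ t * (((x:ℝ) + 1) ^ m * z ^ x) := by rw [step4]; ring

/-- rth uncorrected moment of the Lerch distribution. -/
theorem lerch_uncorrected_moment (z s v : ℝ) (hz0 : 0 < z) (hz1 : z < 1) (hv : 0 < v)
    (r : ℕ) :
    ∑' x : ℕ, (x : ℝ) ^ r * (z ^ x / (((x : ℝ) + v) ^ s * lerchPhi z s v)) =
      (1 / lerchPhi z s v) *
        ∑ j ∈ Finset.range (r + 1), (r.choose j : ℝ) * (-v) ^ (r - j) *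
          lerchPhi z (s - j) v := by
  have key : ∀ x : ℕ, (x:ℝ)^r * (z^x / (((x:ℝ)+v)^s * lerchPhi z s v)) =
      (∑ j ∈ Finset.range (r+1), (r.choose j : ℝ) * (-v)^(r-j) *
        (z^x * ((x:ℝ)+v)^((j:ℝ)-s))) * (lerchPhi z s v)⁻¹ := by
    intro x
    have hx : (0:ℝ) < (x:ℝ) + v := by positivity
    have hpow : (x:ℝ)^r = ∑ j ∈ Finset.range (r+1),
        ((x:ℝ)+v)^j * (-v)^(r-j) * (r.choose j : ℝ) := by
      rw [← add_pow, add_neg_cancel_right]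
    rw [hpow, Finset.sum_mul, Finset.sum_mul]
    refine Finset.sum_congr rfl fun j hj => ?_
    have h1 : ((x:ℝ)+v)^(j:ℕ) * ((x:ℝ)+v)^(-s) = ((x:ℝ)+v)^((j:ℝ)-s) := by
      rw [← Real.rpow_natCast ((x:ℝ)+v) j, ← Real.rpow_add hx, sub_eq_add_neg]
    rw [div_eq_mul_inv, mul_inv, ← Real.rpow_neg hx.le, ← h1]
    ring
  have hsum : ∀ j ∈ Finset.range (r+1), Summable (fun x : ℕ =>
      (r.choose j : ℝ) * (-v)^(r-j) * (z^x * ((x:ℝ)+v)^((j:ℝ)-s))) := fun j _ =>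
    (summable_geom_rpow z v ((j:ℝ)-s) hz0 hz1 hv).mul_left _
  calc ∑' x : ℕ, (x : ℝ) ^ r * (z ^ x / (((x : ℝ) + v) ^ s * lerchPhi z s v))
      = ∑' x : ℕ, (∑ j ∈ Finset.range (r+1), (r.choose j : ℝ) * (-v)^(r-j) *
          (z^x * ((x:ℝ)+v)^((j:ℝ)-s))) * (lerchPhi z s v)⁻¹ := tsum_congr key
    _ = (∑' x : ℕ, ∑ j ∈ Finset.range (r+1), (r.choose j : ℝ) * (-v)^(r-j) *
          (z^x * ((x:ℝ)+v)^((j:ℝ)-s))) * (lerchPhi z s v)⁻¹ := tsum_mul_right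
    _ = (∑ j ∈ Finset.range (r+1), ∑' x : ℕ, (r.choose j : ℝ) * (-v)^(r-j) *
          (z^x * ((x:ℝ)+v)^((j:ℝ)-s))) * (lerchPhi z s v)⁻¹ := by rw [Summable.tsum_finsetSum hsum]
    _ = (∑ j ∈ Finset.range (r+1), (r.choose j : ℝ) * (-v)^(r-j) *
          lerchPhi z (s - j) v) * (lerchPhi z s v)⁻¹ := by
        congr 1
        refine Finset.sum_congr rfl fun j hj => ?_
        rw [tsum_mul_left]
        congr 1
        refine tsum_congr fun x => ?_
        have hx : (0:ℝ) < (x:ℝ) + v := by positivity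
        rw [div_eq_mul_inv, ← Real.rpow_neg hx.le, neg_sub]
    _ = (1 / lerchPhi z s v) * ∑ j ∈ Finset.range (r + 1),
          (r.choose j : ℝ) * (-v) ^ (r - j) * lerchPhi z (s - j) v := by
        rw [one_div, mul_comm]
end
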